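/- Let (ξₙ)_{n≥1} be an i.i.d. sequence of standard normal random variables on a probability space (Ω, P). For N ≥ 2 let M_N := max_{1 ≤ i ≤ N} ξᵢ, let S_N := min over i ≤ N of (max over j ≤ N with j ≠ i of ξⱼ) be the second largest value among ξ₁, …, ξ_N, and let q_N := Φ⁻¹(1 − 1/N). Then M_N − S_N = O_p(1/q_N): for every δ > 0 there exists C > 0 such that limsup_{N→∞} P( q_N·(M_N − S_N) > C ) ≤ δ. -/

import Mathlib

/-! Write `q = q_N` and `Φ̄ = 1 - Φ`, so `N Φ̄(q) = 1`. Comparing the standard normal density at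
`x + h` with that at `x` gives `Φ̄(q + h) ≤ e^{-q h} Φ̄(q)` and `Φ̄(q - h) ≥ e^{q h - h²/2} Φ̄(q)`
for `h ≥ 0`; with `h = c/q` and `q² ≥ c` this yields `N Φ̄(q + c/q) ≤ e^{-c}` and
`m := N Φ̄(q - c/q) ≥ e^{c/2}`. So some `ξ_i` exceeds `q + c/q` with probability at most `e^{-c}`,
and at most one exceeds `q - c/q` with probability at most `(1 + m) e^{-m/2}` (a binomial
estimate). Off these two events the two largest values lie in `[q - c/q, q + c/q]`, so
`q (M_N - S_N) ≤ 2c`, and a large `c` makes both probabilities small. -/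

open MeasureTheory ProbabilityTheory Filter

lemma erase_range_nonempty (N i : ℕ) :
    ((Finset.range (N + 2)).erase i).Nonempty := by
  rcases eq_or_ne i 0 with h | h
  · exact ⟨1, Finset.mem_erase.mpr ⟨by omega, Finset.mem_range.mpr (by omega)⟩⟩
  · exact ⟨0, Finset.mem_erase.mpr ⟨Ne.symm h, Finset.mem_range.mpr (by omega)⟩⟩

open Topology

noncomputable def gaussianTail (t : ℝ) : ℝ := (gaussianReal 0 1).real (Set.Ioi t)

lemma gaussianTail_eq_one_sub_cdf (t : ℝ) : gaussianTail t = 1 - cdf (gaussianReal 0 1) t := by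
  rw [gaussianTail, cdf_eq_real, ← Set.compl_Iic, probReal_compl_eq_one_sub measurableSet_Iic]

lemma gaussianTail_eq_integral (t : ℝ) :
    gaussianTail t = ∫ x in Set.Ioi t, gaussianPDFReal 0 1 x := by
  rw [gaussianTail, measureReal_def, gaussianReal_apply_eq_integral 0 one_ne_zero,
    ENNReal.toReal_ofReal
      (setIntegral_nonneg measurableSet_Ioi fun x _ ↦ gaussianPDFReal_nonneg _ _ _)]

lemma gaussianTail_pos (t : ℝ) : 0 < gaussianTail t := by
  refine ENNReal.toReal_pos (fun h ↦ ?_) (measure_ne_top _ _)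
  have := gaussianReal_absolutelyContinuous' 0 one_ne_zero h
  simp at this

lemma gaussianTail_antitone : Antitone gaussianTail :=
  fun _ _ hst ↦ measureReal_mono (Set.Ioi_subset_Ioi hst)

lemma gaussianPDFReal_add_eq_mul_exp (x h : ℝ) :
    gaussianPDFReal 0 1 (x + h) = gaussianPDFReal 0 1 x * Real.exp (-(x * h) - h ^ 2 / 2) := by
  simp only [gaussianPDFReal, NNReal.coe_one, mul_one, sub_zero, mul_assoc, ← Real.exp_add]
  ring_nf

lemma gaussianTail_add (t h : ℝ) :
    gaussianTail (t + h) = ∫ x in Set.Ioi t, gaussianPDFReal 0 1 (x + h) := by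
  rw [gaussianTail_eq_integral, ← (measurePreserving_add_right volume h).setIntegral_preimage_emb
    (measurableEmbedding_addRight h), Set.preimage_add_const_Ioi, add_sub_cancel_right]

lemma integrable_gaussianPDFReal_add (h : ℝ) :
    Integrable (fun x ↦ gaussianPDFReal 0 1 (x + h)) := by
  simpa only [gaussianPDFReal_add] using integrable_gaussianPDFReal (0 - h) 1

lemma gaussianTail_add_le {q h : ℝ} (hh : 0 ≤ h) :
    gaussianTail (q + h) ≤ Real.exp (-(q * h)) * gaussianTail q := by
  rw [gaussianTail_add, gaussianTail_eq_integral, ← integral_const_mul]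
  refine setIntegral_mono_on (integrable_gaussianPDFReal_add h).integrableOn
    ((integrable_gaussianPDFReal 0 1).const_mul _).integrableOn measurableSet_Ioi fun x hx ↦ ?_
  rw [gaussianPDFReal_add_eq_mul_exp, mul_comm]
  gcongr
  · exact gaussianPDFReal_nonneg _ _ _
  · nlinarith [Set.mem_Ioi.mp hx]

lemma exp_mul_gaussianTail_le_sub {q h : ℝ} (hh : 0 ≤ h) :
    Real.exp (q * h - h ^ 2 / 2) * gaussianTail q ≤ gaussianTail (q - h) := by
  rw [sub_eq_add_neg q h, gaussianTail_add, gaussianTail_eq_integral, ← integral_const_mul]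
  refine setIntegral_mono_on ((integrable_gaussianPDFReal 0 1).const_mul _).integrableOn
    (integrable_gaussianPDFReal_add (-h)).integrableOn measurableSet_Ioi fun x hx ↦ ?_
  rw [gaussianPDFReal_add_eq_mul_exp, mul_comm]
  refine mul_le_mul_of_nonneg_left (Real.exp_le_exp.mpr ?_) (gaussianPDFReal_nonneg _ _ _)
  nlinarith [Set.mem_Ioi.mp hx]

lemma tendsto_atTop_of_tendsto_gaussianTail {α : Type*} {l : Filter α} {q : α → ℝ}
    (h : Tendsto (fun a ↦ gaussianTail (q a)) l (𝓝 0)) : Tendsto q l atTop :=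
  tendsto_atTop.2 fun K ↦ (h.eventually (gt_mem_nhds (gaussianTail_pos K))).mono
    fun _ ha ↦ (gaussianTail_antitone.reflect_lt ha).le

lemma gaussianTail_add_div_le {q c : ℝ} (hq : 0 < q) (hc : 0 ≤ c) :
    gaussianTail (q + c / q) ≤ Real.exp (-c) * gaussianTail q := by
  simpa only [mul_div_cancel₀ c hq.ne'] using gaussianTail_add_le (q := q) (div_nonneg hc hq.le)

lemma exp_half_mul_gaussianTail_le_sub_div {q c : ℝ} (hq : 0 < q) (hc : 0 ≤ c)
    (hcq : c ≤ q ^ 2) : Real.exp (c / 2) * gaussianTail q ≤ gaussianTail (q - c / q) := by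
  refine le_trans ?_ (exp_mul_gaussianTail_le_sub (div_nonneg hc hq.le))
  have : (c / q) ^ 2 ≤ c := by
    rw [div_pow, div_le_iff₀ (by positivity)]; nlinarith
  refine mul_le_mul_of_nonneg_right (Real.exp_le_exp.2 ?_) measureReal_nonneg
  rw [mul_div_cancel₀ c hq.ne']; linarith

lemma one_sub_pow_add_mul_le {p : ℝ} {n : ℕ} (hp0 : 0 ≤ p) (hp1 : p ≤ 1) (hn : 2 ≤ n) :
    (1 - p) ^ n + n * (p * (1 - p) ^ (n - 1)) ≤ (1 + n * p) * Real.exp (-(n * p / 2)) := by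
  have hpow : (1 - p) ^ (n - 1) ≤ Real.exp (-(n * p / 2)) := calc
    (1 - p) ^ (n - 1) ≤ Real.exp (-p) ^ (n - 1) :=
      pow_le_pow_left₀ (by linarith) (by linarith [Real.add_one_le_exp (-p)]) _
    _ = Real.exp (-(((n - 1 : ℕ) : ℝ) * p)) := by rw [← Real.exp_nat_mul]; ring_nf
    _ ≤ Real.exp (-(n * p / 2)) := by
      have : (n : ℝ) / 2 ≤ ((n - 1 : ℕ) : ℝ) := by
        rw [Nat.cast_sub (by omega)]; linarith [(Nat.ofNat_le_cast (α := ℝ)).mpr hn]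
      gcongr; nlinarith
  have hle : (1 - p) ^ n ≤ (1 - p) ^ (n - 1) :=
    pow_le_pow_of_le_one (by linarith) (by linarith) (by omega)
  calc (1 - p) ^ n + n * (p * (1 - p) ^ (n - 1)) ≤ (1 + n * p) * (1 - p) ^ (n - 1) := by
        linarith
    _ ≤ (1 + n * p) * Real.exp (-(n * p / 2)) := by gcongr

lemma tendsto_one_add_mul_exp_neg_half_atTop :
    Tendsto (fun m : ℝ ↦ (1 + m) * Real.exp (-(m / 2))) atTop (𝓝 0) := by
  have h := (Real.tendsto_exp_neg_atTop_nhds_zero.add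
    ((Real.tendsto_pow_mul_exp_neg_atTop_nhds_zero 1).const_mul 2)).comp
      (tendsto_id.atTop_div_const two_pos)
  rw [mul_zero, add_zero] at h
  refine h.congr fun m ↦ ?_
  simp only [Function.comp, id, pow_one]
  ring

lemma sup'_sub_inf'_sup'_erase_le {ι : Type*} [DecidableEq ι] {s : Finset ι} (hs : s.Nonempty)
    (hne : ∀ i, (s.erase i).Nonempty) (x : ι → ℝ) {A B : ℝ} (hA : ∀ i ∈ s, x i ≤ A)
    (hB : ∀ i ∈ s, ∃ j ∈ s, j ≠ i ∧ B ≤ x j) :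
    s.sup' hs x - s.inf' hs (fun i ↦ (s.erase i).sup' (hne i) x) ≤ A - B := by
  have hM : s.sup' hs x ≤ A := Finset.sup'_le hs x hA
  have hS : B ≤ s.inf' hs (fun i ↦ (s.erase i).sup' (hne i) x) := by
    refine Finset.le_inf' hs _ fun i hi ↦ ?_
    obtain ⟨j, hj, hji, hBj⟩ := hB i hi
    exact Finset.le_sup'_of_le x (Finset.mem_erase.mpr ⟨hji, hj⟩) hBj
  linarith

namespace ProbabilityTheory.iIndepFun

variable {Ω ι β : Type*} [MeasurableSpace Ω] [MeasurableSpace β] {P : Measure Ω} {ξ : ι → Ω → β}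

lemma measureReal_biInter_preimage (hindep : iIndepFun ξ P) (s : Finset ι)
    {t : ι → Set β} (ht : ∀ i ∈ s, MeasurableSet (t i)) :
    P.real (⋂ i ∈ s, ξ i ⁻¹' t i) = ∏ i ∈ s, P.real (ξ i ⁻¹' t i) := by
  simp only [measureReal_def, hindep.measure_inter_preimage_eq_mul s ht, ENNReal.toReal_prod]

/-- The event is that at most one `ξ j` lands in `t`; the bound is the probability that a
binomial variable with parameters `#s` and `p` is at most one. -/
lemma measureReal_exists_forall_ne_notMem_le [IsProbabilityMeasure P] [DecidableEq ι]
    (hmeas : ∀ i, Measurable (ξ i)) (hindep : iIndepFun ξ P) {t : Set β} (ht : MeasurableSet t)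
    {p : ℝ} (hp : ∀ i, P.real (ξ i ⁻¹' t) = p) (s : Finset ι) :
    P.real {ω | ∃ i ∈ s, ∀ j ∈ s, j ≠ i → ξ j ω ∉ t}
      ≤ (1 - p) ^ s.card + s.card * (p * (1 - p) ^ (s.card - 1)) := by
  have hcompl (i : ι) : P.real (ξ i ⁻¹' tᶜ) = 1 - p := by
    rw [Set.preimage_compl, probReal_compl_eq_one_sub (hmeas i ht), hp]
  have hmeas_update (i : ι) : ∀ j ∈ s, MeasurableSet (Function.update (fun _ ↦ tᶜ) i t j) :=
    fun j _ ↦ by rcases eq_or_ne j i with rfl | hji <;> simp [*, ht.compl]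
  have hP_none : P.real (⋂ j ∈ s, ξ j ⁻¹' tᶜ) = (1 - p) ^ s.card := by
    rw [hindep.measureReal_biInter_preimage s fun _ _ ↦ ht.compl,
      Finset.prod_congr rfl fun j _ ↦ hcompl j, Finset.prod_const]
  have hP_only (i : ι) (hi : i ∈ s) :
      P.real (⋂ j ∈ s, ξ j ⁻¹' Function.update (fun _ ↦ tᶜ) i t j)
        = p * (1 - p) ^ (s.card - 1) := by
    rw [hindep.measureReal_biInter_preimage s (hmeas_update i), ← Finset.mul_prod_erase s _ hi,
      Finset.prod_congr rfl fun j hj ↦ by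
        rw [Function.update_of_ne (Finset.ne_of_mem_erase hj), hcompl],
      Finset.prod_const, Finset.card_erase_of_mem hi, Function.update_self, hp]
  have hsub : {ω | ∃ i ∈ s, ∀ j ∈ s, j ≠ i → ξ j ω ∉ t}
      ⊆ (⋂ j ∈ s, ξ j ⁻¹' tᶜ) ∪ ⋃ i ∈ s, ⋂ j ∈ s, ξ j ⁻¹' Function.update (fun _ ↦ tᶜ) i t j := by
    rintro ω ⟨i, hi, hothers⟩
    by_cases hit : ξ i ω ∈ t
    · refine Or.inr (Set.mem_biUnion hi (Set.mem_iInter₂.mpr fun j hj ↦ ?_))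
      by_cases hji : j = i
      · subst hji; simpa using hit
      · simpa [hji] using hothers j hj hji
    · refine Or.inl (Set.mem_iInter₂.mpr fun j hj ↦ ?_)
      by_cases hji : j = i
      · subst hji; exact hit
      · exact hothers j hj hji
  calc P.real {ω | ∃ i ∈ s, ∀ j ∈ s, j ≠ i → ξ j ω ∉ t}
      ≤ P.real (⋂ j ∈ s, ξ j ⁻¹' tᶜ)
        + ∑ i ∈ s, P.real (⋂ j ∈ s, ξ j ⁻¹' Function.update (fun _ ↦ tᶜ) i t j) :=
        (measureReal_mono hsub).trans ((measureReal_union_le _ _).trans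
          (add_le_add le_rfl (measureReal_biUnion_finset_le _ _)))
    _ = (1 - p) ^ s.card + s.card * (p * (1 - p) ^ (s.card - 1)) := by
        rw [hP_none, Finset.sum_congr rfl hP_only, Finset.sum_const, nsmul_eq_mul]

end ProbabilityTheory.iIndepFun

lemma ProbabilityTheory.iIndepFun.measureReal_lt_sup'_sub_inf'_sup'_erase_le {Ω ι : Type*}
    [MeasurableSpace Ω] {P : Measure Ω} [IsProbabilityMeasure P] [DecidableEq ι] {ξ : ι → Ω → ℝ}
    (hmeas : ∀ i, Measurable (ξ i)) (hindep : iIndepFun ξ P) {μ : Measure ℝ}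
    (hlaw : ∀ i, P.map (ξ i) = μ) {s : Finset ι} (hs : s.Nonempty)
    (hne : ∀ i, (s.erase i).Nonempty) (A B : ℝ) :
    P.real {ω | A - B < s.sup' hs (ξ · ω) - s.inf' hs (fun i ↦ (s.erase i).sup' (hne i) (ξ · ω))}
      ≤ s.card * μ.real (Set.Ioi A) + ((1 - μ.real (Set.Ioi B)) ^ s.card
        + s.card * (μ.real (Set.Ioi B) * (1 - μ.real (Set.Ioi B)) ^ (s.card - 1))) := by
  have hlaw' (t : ℝ) (i : ι) : P.real (ξ i ⁻¹' Set.Ioi t) = μ.real (Set.Ioi t) := by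
    rw [← hlaw i, map_measureReal_apply (hmeas i) measurableSet_Ioi]
  have hsub : {ω | A - B < s.sup' hs (ξ · ω) - s.inf' hs (fun i ↦ (s.erase i).sup' (hne i) (ξ · ω))}
      ⊆ (⋃ i ∈ s, ξ i ⁻¹' Set.Ioi A) ∪ {ω | ∃ i ∈ s, ∀ j ∈ s, j ≠ i → ξ j ω ∉ Set.Ioi B} := by
    intro ω hω
    by_contra hout
    simp only [Set.mem_union, Set.mem_iUnion, Set.mem_preimage, Set.mem_Ioi, Set.mem_ofPred_eq,
      not_or, not_exists, not_and, not_forall, not_lt, not_le] at hout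
    refine absurd hω (not_lt.2 (sup'_sub_inf'_sup'_erase_le hs hne _ hout.1 ?_))
    intro i hi
    obtain ⟨j, hj, hji, hBj⟩ := hout.2 i hi
    exact ⟨j, hj, hji, hBj.le⟩
  calc _ ≤ P.real (⋃ i ∈ s, ξ i ⁻¹' Set.Ioi A)
        + P.real {ω | ∃ i ∈ s, ∀ j ∈ s, j ≠ i → ξ j ω ∉ Set.Ioi B} :=
        (measureReal_mono hsub).trans (measureReal_union_le _ _)
    _ ≤ _ := by
        gcongr
        · refine (measureReal_biUnion_finset_le _ _).trans_eq ?_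
          rw [Finset.sum_congr rfl fun i _ ↦ hlaw' A i, Finset.sum_const, nsmul_eq_mul]
        · exact hindep.measureReal_exists_forall_ne_notMem_le hmeas measurableSet_Ioi (hlaw' B) s

lemma gaussian_measureReal_spacing_gt_le {Ω ι : Type*} [MeasurableSpace Ω] {P : Measure Ω}
    [IsProbabilityMeasure P] [DecidableEq ι] {ξ : ι → Ω → ℝ} (hmeas : ∀ i, Measurable (ξ i))
    (hindep : iIndepFun ξ P) (hlaw : ∀ i, P.map (ξ i) = gaussianReal 0 1) {s : Finset ι}
    (hs : s.Nonempty) (hne : ∀ i, (s.erase i).Nonempty) (hcard : 2 ≤ s.card) {q c : ℝ}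
    (hq : gaussianTail q = 1 / s.card) (hq0 : 0 < q) (hc : 0 ≤ c) (hcq : c ≤ q ^ 2) :
    ∃ m ≥ Real.exp (c / 2),
      P.real {ω | c + c < q * (s.sup' hs (ξ · ω)
        - s.inf' hs (fun i ↦ (s.erase i).sup' (hne i) (ξ · ω)))}
        ≤ Real.exp (-c) + (1 + m) * Real.exp (-(m / 2)) := by
  have hcard0 : (s.card : ℝ) ≠ 0 := by norm_cast; omega
  refine ⟨s.card * gaussianTail (q - c / q), ?_, ?_⟩
  · calc Real.exp (c / 2) = s.card * (Real.exp (c / 2) * gaussianTail q) := by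
          rw [hq]; field_simp
      _ ≤ s.card * gaussianTail (q - c / q) := by
          gcongr; exact exp_half_mul_gaussianTail_le_sub_div hq0 hc hcq
  have hgap : q + c / q - (q - c / q) = (c + c) / q := by ring
  calc _ ≤ P.real {ω | q + c / q - (q - c / q) < s.sup' hs (ξ · ω)
        - s.inf' hs (fun i ↦ (s.erase i).sup' (hne i) (ξ · ω))} :=
        measureReal_mono fun ω hω ↦ by rwa [Set.mem_ofPred_eq, hgap, div_lt_iff₀' hq0]
    _ ≤ _ := hindep.measureReal_lt_sup'_sub_inf'_sup'_erase_le hmeas hlaw hs hne _ _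
    _ ≤ _ := by
        refine add_le_add ?_ (one_sub_pow_add_mul_le measureReal_nonneg measureReal_le_one hcard)
        calc s.card * gaussianTail (q + c / q) ≤ s.card * (Real.exp (-c) * gaussianTail q) := by
              gcongr; exact gaussianTail_add_div_le hq0 hc
          _ = Real.exp (-c) := by rw [hq]; field_simp

/-- **Lemma 1 (Gaussian maxima and spacing), spacing claim.** Let `(ξₙ)` be an i.i.d.
sequence of standard normal random variables, `M_N` the maximum and `S_N` the second
largest value among the first `N` of them (here realized over the `N + 2` variables
`ξ₀, …, ξ_{N+1}`; the second largest is the minimum over indices `i` of the maximum of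
the family with index `i` removed), and `q_N = Φ⁻¹(1 − 1/N)`. Then
`M_N − S_N = O_p(1/q_N)`: for every `δ > 0` there is `C > 0` with
`limsup_N P(q_N (M_N − S_N) > C) ≤ δ`. -/
theorem gaussian_max_spacing
    {Ω : Type*} [MeasurableSpace Ω] (P : Measure Ω) [IsProbabilityMeasure P]
    (ξ : ℕ → Ω → ℝ)
    (hmeas : ∀ i, Measurable (ξ i))
    (hindep : iIndepFun ξ P)
    (hlaw : ∀ i, Measure.map (ξ i) P = gaussianReal 0 1)
    (q : ℕ → ℝ)
    (hq : ∀ N : ℕ, 2 ≤ N → cdf (gaussianReal 0 1) (q N) = 1 - 1 / (N : ℝ)) :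
    ∀ δ > (0 : ℝ), ∃ C > (0 : ℝ),
      Filter.limsup
        (fun N : ℕ =>
          (P {ω | C < q (N + 2) *
              ((Finset.range (N + 2)).sup' Finset.nonempty_range_add_one
                  (fun i => ξ i ω) -
                (Finset.range (N + 2)).inf' Finset.nonempty_range_add_one
                  (fun i => ((Finset.range (N + 2)).erase i).sup'
                    (erase_range_nonempty N i) (fun j => ξ j ω)))}).toReal)
        atTop ≤ δ := by
  intro δ hδ
  obtain ⟨T, hT⟩ := eventually_atTop.1
    (tendsto_one_add_mul_exp_neg_half_atTop.eventually (ge_mem_nhds (half_pos hδ)))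
  obtain ⟨c, hc0, hcT, hc⟩ := ((eventually_gt_atTop 0).and
    (((Real.tendsto_exp_atTop.comp (tendsto_id.atTop_div_const two_pos)).eventually_ge_atTop T).and
      (Real.tendsto_exp_neg_atTop_nhds_zero.eventually (ge_mem_nhds (half_pos hδ))))).exists
  refine ⟨c + c, by positivity, ?_⟩
  have htail (N : ℕ) : gaussianTail (q (N + 2)) = 1 / ((N + 2 : ℕ) : ℝ) := by
    rw [gaussianTail_eq_one_sub_cdf, hq _ (by omega)]; ring
  have hq_top : Tendsto (fun N ↦ q (N + 2)) atTop atTop :=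
    tendsto_atTop_of_tendsto_gaussianTail <|
      (tendsto_one_div_atTop_nhds_zero_nat.comp (tendsto_add_atTop_nat 2)).congr
        fun N ↦ (htail N).symm
  refine limsup_le_of_le (isCoboundedUnder_le_of_le atTop fun _ ↦ ENNReal.toReal_nonneg) ?_
  filter_upwards [hq_top.eventually_gt_atTop 0,
    ((tendsto_pow_atTop two_ne_zero).comp hq_top).eventually_ge_atTop c] with N hq0 hqc
  obtain ⟨m, hm, hbound⟩ := gaussian_measureReal_spacing_gt_le hmeas hindep hlaw
    Finset.nonempty_range_add_one (erase_range_nonempty N) (by simp)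
    (by rw [Finset.card_range, htail]) hq0 hc0.le hqc
  calc _ ≤ Real.exp (-c) + (1 + m) * Real.exp (-(m / 2)) := hbound
    _ ≤ δ / 2 + δ / 2 := add_le_add hc (hT m (hcT.trans hm))
    _ = δ := add_halves δ
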